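/- Let m > 0, b > 0 and c > 1. If x > 0 satisfies I_m(x/b)/I_{m−1}(x/b) = 1/c (the mode equation of the McKay Type I distribution with parameters m, b, c), then x > (bc/(c² − 1))·[m − 1 + √((m − 1)² + 4(c² − 1)m/c²)]. -/

import Mathlib

open Real MeasureTheory

/-- Modified Bessel function of the first kind. -/
noncomputable def besselI (ν x : ℝ) : ℝ :=
  ∑' k : ℕ, (x / 2) ^ (ν + 2 * (k : ℝ)) / (Real.Gamma (ν + (k : ℝ) + 1) * (k.factorial : ℝ))

/-!
Put `t = x / b`. The recurrence `I_{ν-1} - I_{ν+1} = (2ν/t) I_ν` at `ν = m` and `ν = m + 1`,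
together with `I_{m-1} = c I_m`, turns the Turán-type inequality `I_m I_{m+2} < I_{m+1}²` into
`(c² - 1) t² - 2 (m - 1) c t - 4 m > 0`; since `t > 0` and the constant term is negative, `t`
exceeds the positive root of this quadratic, which is the bound.

The Turán inequality is compared coefficientwise in the Cauchy product: by Chu–Vandermonde the
`n`-th coefficient of `I_μ I_ν` is `(t/2)^(μ+ν+2n) (μ+ν+2n)ₙ / (n! Γ(μ+n+1) Γ(ν+n+1))` with a
falling factorial, and `Γ(z+1)² < Γ(z) Γ(z+2)`.
-/

open Finset Polynomial

theorem descPochhammer_eval_add {R : Type*} [CommRing R] (r s : R) (n : ℕ) :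
    (descPochhammer R n).eval (r + s) = ∑ ij ∈ antidiagonal n,
      n.choose ij.1 * ((descPochhammer R ij.1).eval r * (descPochhammer R ij.2).eval s) := by
  simp only [descPochhammer_eval_eq_ascPochhammer, ← ascPochhammer_smeval_eq_eval,
    ← descPochhammer_smeval_eq_ascPochhammer]
  exact Ring.descPochhammer_smeval_add n (Commute.all r s)

theorem Real.Gamma_add_nat_eq_descPochhammer_mul {z : ℝ} (hz : 0 < z) (n : ℕ) :
    Gamma (z + n) = (descPochhammer ℝ n).eval (z + n - 1) * Gamma z := by
  rw [descPochhammer_eval_eq_ascPochhammer, show z + n - 1 - n + 1 = z by ring]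
  induction n with
  | zero => simp
  | succ n ih =>
    rw [Nat.cast_succ, ← add_assoc, Gamma_add_one (by positivity), ih, ascPochhammer_succ_eval]
    ring

theorem Real.Gamma_add_one_sq_lt {z : ℝ} (hz : 0 < z) :
    Gamma (z + 1) ^ 2 < Gamma z * Gamma (z + 2) := by
  have hΓ := Gamma_pos_of_pos hz
  rw [show z + 2 = z + 1 + 1 by ring, Gamma_add_one (by positivity : z + 1 ≠ 0),
    Gamma_add_one hz.ne']
  nlinarith [mul_pos (mul_pos hz hΓ) hΓ]

noncomputable def besselTerm (ν t : ℝ) (k : ℕ) : ℝ :=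
  (t / 2) ^ (ν + 2 * (k : ℝ)) / (Gamma (ν + k + 1) * k.factorial)

theorem besselI_eq_tsum (ν t : ℝ) : besselI ν t = ∑' k, besselTerm ν t k := rfl

section
variable {ν t : ℝ}

theorem besselTerm_pos (ht : 0 < t) (hν : -1 < ν) (k : ℕ) : 0 < besselTerm ν t k := by
  have : 0 < ν + k + 1 := by linarith [(Nat.cast_nonneg k : (0 : ℝ) ≤ k)]
  have := Gamma_pos_of_pos this
  unfold besselTerm
  positivity

theorem besselTerm_succ (ht : 0 < t) (hν : -1 < ν) (k : ℕ) :
    besselTerm ν t (k + 1) = besselTerm ν t k * ((t / 2) ^ 2 / ((ν + k + 1) * (k + 1))) := by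
  have : 0 < ν + k + 1 := by linarith [(Nat.cast_nonneg k : (0 : ℝ) ≤ k)]
  have := Gamma_pos_of_pos this
  unfold besselTerm
  rw [show ν + 2 * ((k + 1 : ℕ) : ℝ) = ν + 2 * k + 2 by push_cast; ring,
    rpow_add (by positivity), rpow_two,
    show ν + ((k + 1 : ℕ) : ℝ) + 1 = ν + k + 1 + 1 by push_cast; ring,
    Gamma_add_one (by positivity), Nat.factorial_succ]
  push_cast
  field_simp

theorem summable_besselTerm (ht : 0 < t) (hν : -1 < ν) : Summable (besselTerm ν t) := by
  refine summable_of_ratio_norm_eventually_le (r := 1 / 2) (by norm_num) ?_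
  filter_upwards [Filter.eventually_ge_atTop ⌈2 * (t / 2) ^ 2⌉₊] with k hk
  have hk : 2 * (t / 2) ^ 2 ≤ k := Nat.ceil_le.mp hk
  have hden : 2 * (t / 2) ^ 2 ≤ (ν + k + 1) * (k + 1) := by nlinarith
  have hpos : 0 < (ν + k + 1) * (k + 1) := by nlinarith
  rw [norm_of_nonneg (besselTerm_pos ht hν _).le, norm_of_nonneg (besselTerm_pos ht hν _).le,
    besselTerm_succ ht hν, mul_comm (1 / 2)]
  refine mul_le_mul_of_nonneg_left ?_ (besselTerm_pos ht hν _).le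
  rw [div_le_iff₀ hpos]
  linarith

theorem summable_norm_besselTerm (ht : 0 < t) (hν : -1 < ν) :
    Summable (fun k ↦ ‖besselTerm ν t k‖) := by
  simpa [Real.norm_eq_abs] using (summable_besselTerm ht hν).abs

theorem besselI_pos (ht : 0 < t) (hν : -1 < ν) : 0 < besselI ν t :=
  (summable_besselTerm ht hν).tsum_pos (fun k ↦ (besselTerm_pos ht hν k).le) 0
    (besselTerm_pos ht hν 0)

theorem besselTerm_sub_one_zero (ht : 0 < t) (hν : 0 < ν) :
    besselTerm (ν - 1) t 0 = 2 * ν / t * besselTerm ν t 0 := by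
  have := Gamma_pos_of_pos hν
  unfold besselTerm
  rw [Nat.cast_zero, mul_zero, add_zero, add_zero, sub_add_cancel, Gamma_add_one hν.ne',
    show ν = ν - 1 + 1 by ring, rpow_add_one (by positivity)]
  simp only [sub_add_cancel]
  field_simp

theorem besselTerm_sub_one_succ (ht : 0 < t) (hν : 0 < ν) (k : ℕ) :
    besselTerm (ν - 1) t (k + 1) =
      besselTerm (ν + 1) t k + 2 * ν / t * besselTerm ν t (k + 1) := by
  have hz : 0 < ν + k + 1 := by positivity
  have := Gamma_pos_of_pos hz
  unfold besselTerm
  rw [show ν - 1 + 2 * ((k + 1 : ℕ) : ℝ) = ν + 1 + 2 * k by push_cast; ring,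
    show ν - 1 + ((k + 1 : ℕ) : ℝ) + 1 = ν + k + 1 by push_cast; ring,
    show ν + 1 + k + 1 = ν + k + 1 + 1 by ring,
    show ν + 2 * ((k + 1 : ℕ) : ℝ) = ν + 1 + 2 * k + 1 by push_cast; ring,
    show ν + ((k + 1 : ℕ) : ℝ) + 1 = ν + k + 1 + 1 by push_cast; ring,
    rpow_add_one (by positivity), Gamma_add_one hz.ne', Nat.factorial_succ]
  push_cast
  field_simp
  ring

theorem besselI_sub_one_sub_besselI_add_one (ht : 0 < t) (hν : 0 < ν) :
    besselI (ν - 1) t - besselI (ν + 1) t = 2 * ν / t * besselI ν t := by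
  have hshift : Summable (fun k ↦ besselTerm ν t (k + 1)) :=
    (summable_nat_add_iff 1).mpr (summable_besselTerm ht (by linarith))
  rw [besselI_eq_tsum, besselI_eq_tsum, besselI_eq_tsum,
    (summable_besselTerm ht (by linarith)).tsum_eq_zero_add,
    (summable_besselTerm ht (by linarith)).tsum_eq_zero_add (f := besselTerm ν t),
    tsum_congr (besselTerm_sub_one_succ ht hν),
    (summable_besselTerm ht (by linarith)).tsum_add (hshift.mul_left _), tsum_mul_left,
    besselTerm_sub_one_zero ht hν]
  ring

theorem besselTerm_mul_besselTerm (ht : 0 < t) {x y : ℝ} (hx : -1 < x) (hy : -1 < y)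
    {k l n : ℕ} (hkl : k + l = n) :
    besselTerm x t k * besselTerm y t l =
      (t / 2) ^ (x + y + 2 * n) / (n.factorial * Gamma (x + n + 1) * Gamma (y + n + 1)) *
        (n.choose k * ((descPochhammer ℝ k).eval (y + n) * (descPochhammer ℝ l).eval (x + n))) := by
  have hn : (k : ℝ) + l = n := by exact_mod_cast hkl
  have hxk : 0 < x + k + 1 := by linarith [(Nat.cast_nonneg k : (0 : ℝ) ≤ k)]
  have hyl : 0 < y + l + 1 := by linarith [(Nat.cast_nonneg l : (0 : ℝ) ≤ l)]
  have hΓx : Gamma (x + n + 1) = (descPochhammer ℝ l).eval (x + n) * Gamma (x + k + 1) := by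
    rw [← hn, show x + (k + l) + 1 = x + k + 1 + l by ring, Gamma_add_nat_eq_descPochhammer_mul hxk]
    ring_nf
  have hΓy : Gamma (y + n + 1) = (descPochhammer ℝ k).eval (y + n) * Gamma (y + l + 1) := by
    rw [← hn, show y + (k + l) + 1 = y + l + 1 + k by ring, Gamma_add_nat_eq_descPochhammer_mul hyl]
    ring_nf
  have hfact : (n.factorial : ℝ) = n.choose k * k.factorial * l.factorial := by
    rw [← hkl, add_comm k l, ← Nat.add_choose_mul_factorial_mul_factorial l k]
    push_cast
    ring
  have hpow : (t / 2) ^ (x + y + 2 * n) = (t / 2) ^ (x + 2 * k) * (t / 2) ^ (y + 2 * l) := by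
    rw [← rpow_add (by positivity), ← hn]; ring_nf
  have : 0 < (descPochhammer ℝ l).eval (x + n) := descPochhammer_pos (by linarith)
  have : 0 < (descPochhammer ℝ k).eval (y + n) := descPochhammer_pos (by linarith)
  have := Gamma_pos_of_pos hxk
  have := Gamma_pos_of_pos hyl
  have : 0 < (n.choose k : ℝ) := by exact_mod_cast Nat.choose_pos (by omega)
  unfold besselTerm
  rw [hΓx, hΓy, hfact, hpow]
  field_simp

theorem sum_antidiagonal_besselTerm_mul (ht : 0 < t) {x y : ℝ} (hx : -1 < x) (hy : -1 < y)
    (n : ℕ) :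
    ∑ kl ∈ antidiagonal n, besselTerm x t kl.1 * besselTerm y t kl.2 =
      (t / 2) ^ (x + y + 2 * n) * (descPochhammer ℝ n).eval (x + y + 2 * n) /
        (n.factorial * Gamma (x + n + 1) * Gamma (y + n + 1)) := by
  rw [sum_congr rfl fun kl hkl ↦ besselTerm_mul_besselTerm ht hx hy (mem_antidiagonal.mp hkl),
    ← mul_sum, show x + y + 2 * (n : ℝ) = y + n + (x + n) by ring, ← descPochhammer_eval_add]
  ring

theorem besselI_sub_one_mul_besselI_add_one_lt_sq (ht : 0 < t) (hν : 0 < ν) :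
    besselI (ν - 1) t * besselI (ν + 1) t < besselI ν t ^ 2 := by
  have hlo : -1 < ν - 1 := by linarith
  have hmid : -1 < ν := by linarith
  have hhi : -1 < ν + 1 := by linarith
  have hcoeff (n : ℕ) :
      ∑ kl ∈ antidiagonal n, besselTerm (ν - 1) t kl.1 * besselTerm (ν + 1) t kl.2 <
        ∑ kl ∈ antidiagonal n, besselTerm ν t kl.1 * besselTerm ν t kl.2 := by
    have hz : 0 < ν + n := by positivity
    rw [sum_antidiagonal_besselTerm_mul ht hlo hhi, sum_antidiagonal_besselTerm_mul ht hmid hmid,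
      show ν - 1 + (ν + 1) = ν + ν by ring, show ν - 1 + n + 1 = ν + n by ring,
      show ν + 1 + n + 1 = ν + n + 2 by ring]
    have := Gamma_pos_of_pos hz
    have : 0 < (descPochhammer ℝ n).eval (ν + ν + 2 * n) := descPochhammer_pos (by linarith)
    apply div_lt_div_of_pos_left (by positivity) (by positivity)
    rw [mul_assoc, mul_assoc, ← sq]
    exact mul_lt_mul_of_pos_left (Gamma_add_one_sq_lt hz) (by positivity)
  rw [sq, besselI_eq_tsum, besselI_eq_tsum, besselI_eq_tsum,
    tsum_mul_tsum_eq_tsum_sum_antidiagonal_of_summable_norm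
      (summable_norm_besselTerm ht hlo) (summable_norm_besselTerm ht hhi),
    tsum_mul_tsum_eq_tsum_sum_antidiagonal_of_summable_norm
      (summable_norm_besselTerm ht hmid) (summable_norm_besselTerm ht hmid)]
  refine Summable.tsum_lt_tsum_of_nonneg
    (fun n ↦ sum_nonneg fun kl _ ↦ (mul_pos (besselTerm_pos ht hlo _) (besselTerm_pos ht hhi _)).le)
    (fun n ↦ (hcoeff n).le) (hcoeff 0) ?_
  exact summable_sum_mul_antidiagonal_of_summable_mul
    (summable_mul_of_summable_norm (summable_norm_besselTerm ht hmid)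
      (summable_norm_besselTerm ht hmid))

theorem besselI_ratio_quadratic_pos (ht : 0 < t) (hν : 0 < ν) :
    0 < (besselI (ν - 1) t ^ 2 - besselI ν t ^ 2) * t ^ 2
      - 2 * (ν - 1) * t * besselI (ν - 1) t * besselI ν t - 4 * ν * besselI ν t ^ 2 := by
  have h₀ := besselI_sub_one_sub_besselI_add_one ht hν
  have h₁ := besselI_sub_one_sub_besselI_add_one ht (show 0 < ν + 1 by linarith)
  have hturan := besselI_sub_one_mul_besselI_add_one_lt_sq ht (show 0 < ν + 1 by linarith)
  rw [add_sub_cancel_right, add_assoc, one_add_one_eq_two] at h₁ hturan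
  set A := besselI (ν - 1) t
  set B := besselI ν t
  set C := besselI (ν + 1) t
  set D := besselI (ν + 2) t
  have hC : t * C = t * A - 2 * ν * B := by
    field_simp at h₀; linear_combination -h₀
  have hD : t * D = t * B - 2 * (ν + 1) * C := by
    field_simp at h₁; linear_combination -h₁
  have key : (A ^ 2 - B ^ 2) * t ^ 2 - 2 * (ν - 1) * t * A * B - 4 * ν * B ^ 2
      = t ^ 2 * (C ^ 2 - B * D) := by
    linear_combination -(t * C + t * A - 2 * ν * B + 2 * (ν + 1) * B) * hC + t * B * hD
  rw [key]
  have : 0 < C ^ 2 - B * D := by linarith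
  positivity
end

theorem add_sqrt_sq_add_lt {s β K : ℝ} (hs : 0 ≤ s) (hK : 0 ≤ K) (h : K < s ^ 2 - 2 * β * s) :
    β + √(β ^ 2 + K) < s := by
  have hβ : β < s := by
    by_contra! hsβ
    nlinarith [mul_nonneg hs (sub_nonneg.mpr hsβ)]
  have : √(β ^ 2 + K) < s - β := (sqrt_lt' (by linarith)).mpr (by nlinarith)
  linarith

theorem stmt_15 (m b c : ℝ) (hm : 0 < m) (hb : 0 < b) (hc : 1 < c) (x : ℝ) (hx : 0 < x)
    (hmode : besselI m (x / b) / besselI (m - 1) (x / b) = 1 / c) :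
    x > b * c / (c ^ 2 - 1) *
      (m - 1 + Real.sqrt ((m - 1) ^ 2 + 4 * (c ^ 2 - 1) * m / c ^ 2)) := by
  set t := x / b
  have ht : 0 < t := div_pos hx hb
  have hc₀ : 0 < c := by linarith
  have hc₁ : 0 < c ^ 2 - 1 := by nlinarith
  have hA : besselI (m - 1) t = c * besselI m t := by
    rw [div_eq_div_iff (besselI_pos ht (by linarith)).ne' hc₀.ne'] at hmode
    linarith
  have hquad : 0 < (c ^ 2 - 1) * t ^ 2 - 2 * (m - 1) * c * t - 4 * m := by
    refine pos_of_mul_pos_right (a := besselI m t ^ 2) ?_ (sq_nonneg _)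
    exact (besselI_ratio_quadratic_pos ht hm).trans_eq (by rw [hA]; ring)
  set s := (c ^ 2 - 1) * t / c
  have hs : 4 * (c ^ 2 - 1) * m / c ^ 2 < s ^ 2 - 2 * (m - 1) * s := by
    have : s ^ 2 - 2 * (m - 1) * s - 4 * (c ^ 2 - 1) * m / c ^ 2
        = (c ^ 2 - 1) / c ^ 2 * ((c ^ 2 - 1) * t ^ 2 - 2 * (m - 1) * c * t - 4 * m) := by
      simp only [s]; field_simp
    linarith [mul_pos (div_pos hc₁ (pow_pos hc₀ 2)) hquad]
  have hx_eq : x = b * c / (c ^ 2 - 1) * s := by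
    simp only [s, t]; field_simp
  rw [gt_iff_lt, hx_eq]
  exact mul_lt_mul_of_pos_left (add_sqrt_sq_add_lt (by positivity) (by positivity) hs)
    (by positivity)
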